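/- Let H be a Hilbert space (e.g. L²([0,T],ℝᵏ)), φ ∈ H a fixed element, Q ∈ H, and define ψ(P) = ⟨φ, P - Q⟩. Suppose ψ is nonnegative on K = {P ∈ H : 0 ≤ P(t) ≤ 1 a.e.} and ψ(Q) = 0 with Q ∈ K. If (λₙ) are nonnegative reals, (Pₙ), (Rₙ), (Sₙ) are sequences in H with Rₙ ≥ 0 and Sₙ ≥ 0 a.e., such that λₙ(Pₙ - Rₙ) → 0 in H, λₙ(Pₙ + Sₙ - 1) → 0 in H, and λₙ(ψ(Pₙ) + αₙ) → l for some αₙ ≥ 0, and moreover φ satisfies the sign conditions: φ ≤ 0 a.e. on {Q = 0}, φ = 0 a.e. on {0 < Q < 1}, φ ≥ 0 a.e. on {Q = 1}, then l ≥ 0. -/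

import Mathlib

/-!
Clamp `Pₙ` coordinatewise to `[0, 1]`. The clamped function `P'ₙ` lies in `K`, so `ψ(P'ₙ) ≥ 0`,
and pointwise `|x - clamp x| ≤ |x - r| + |x + s - 1|` whenever `r, s ≥ 0`, so
`‖λₙ (Pₙ - P'ₙ)‖₂ ≤ ‖λₙ (Pₙ - Rₙ)‖₂ + ‖λₙ (Pₙ + Sₙ - 1)‖₂ → 0`. By Cauchy–Schwarz
`λₙ (ψ(Pₙ) + αₙ) ≥ λₙ ψ(P'ₙ) + ⟨φ, λₙ (Pₙ - P'ₙ)⟩ ≥ -‖φ‖₂ ‖λₙ (Pₙ - P'ₙ)‖₂`, and the right-hand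
side tends to `0`.
-/

open MeasureTheory Filter RealInnerProductSpace

theorem abs_sub_max_min_le {x r s : ℝ} (hr : 0 ≤ r) (hs : 0 ≤ s) :
    |x - max 0 (min 1 x)| ≤ |x - r| + |x + s - 1| := by
  rcases le_total x 0 with h | h
  · rw [min_eq_right (h.trans zero_le_one), max_eq_left h, sub_zero, abs_of_nonpos h,
      abs_sub_comm]
    linarith [le_abs_self (r - x), abs_nonneg (x + s - 1)]
  rcases le_total x 1 with h' | h'
  · rw [min_eq_right h', max_eq_right h, sub_self, abs_zero]
    positivity
  · rw [min_eq_left h', max_eq_right zero_le_one, abs_of_nonneg (by linarith)]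
    linarith [le_abs_self (x + s - 1), abs_nonneg (x - r)]

namespace EuclideanSpace

variable {ι : Type*}

theorem norm_le_norm_of_forall_abs_le [Fintype ι] {x y : EuclideanSpace ℝ ι}
    (h : ∀ i, |x i| ≤ |y i|) : ‖x‖ ≤ ‖y‖ := by
  rw [EuclideanSpace.norm_eq, EuclideanSpace.norm_eq]
  gcongr with i
  simpa only [Real.norm_eq_abs] using h i

theorem norm_le_add_of_forall_abs_le_add [Fintype ι] {x y z : EuclideanSpace ℝ ι}
    (h : ∀ i, |x i| ≤ |y i| + |z i|) : ‖x‖ ≤ ‖y‖ + ‖z‖ := by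
  let absY : EuclideanSpace ℝ ι := WithLp.toLp 2 fun i => |y i|
  let absZ : EuclideanSpace ℝ ι := WithLp.toLp 2 fun i => |z i|
  calc ‖x‖ ≤ ‖absY + absZ‖ :=
        norm_le_norm_of_forall_abs_le fun i => (h i).trans (le_abs_self _)
    _ ≤ ‖absY‖ + ‖absZ‖ := norm_add_le _ _
    _ ≤ ‖y‖ + ‖z‖ := by
        gcongr <;> exact norm_le_norm_of_forall_abs_le fun i => (abs_abs _).le

def clampUnitBox (x : EuclideanSpace ℝ ι) : EuclideanSpace ℝ ι :=
  WithLp.toLp 2 fun i => max 0 (min 1 (x i))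

theorem clampUnitBox_apply_mem_Icc (x : EuclideanSpace ℝ ι) (i : ι) :
    clampUnitBox x i ∈ Set.Icc (0 : ℝ) 1 :=
  ⟨le_max_left _ _, max_le zero_le_one (min_le_left _ _)⟩

theorem continuous_clampUnitBox : Continuous (clampUnitBox : EuclideanSpace ℝ ι → _) :=
  (PiLp.continuous_toLp 2 _).comp <| continuous_pi fun i =>
    continuous_const.max <| continuous_const.min <|
      (continuous_apply i).comp (PiLp.continuous_ofLp 2 _)

theorem norm_clampUnitBox_le [Fintype ι] (x : EuclideanSpace ℝ ι) : ‖clampUnitBox x‖ ≤ ‖x‖ :=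
  norm_le_norm_of_forall_abs_le fun i => by
    simp only [clampUnitBox, PiLp.toLp_apply]
    rcases le_total (x i) 0 with h | h
    · rw [max_eq_left (min_le_of_right_le h), abs_zero]
      exact abs_nonneg _
    · rw [abs_of_nonneg (le_max_left _ _), abs_of_nonneg h]
      exact max_le h (min_le_right _ _)

theorem norm_smul_sub_clampUnitBox_le [Fintype ι] (c : ℝ) {x r s : EuclideanSpace ℝ ι}
    (hr : ∀ i, 0 ≤ r i) (hs : ∀ i, 0 ≤ s i) :
    ‖c • (x - clampUnitBox x)‖ ≤
      ‖c • (x - r)‖ + ‖c • (x + s - (WithLp.equiv 2 (ι → ℝ)).symm 1)‖ := by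
  simp only [norm_smul, ← mul_add]
  gcongr
  exact norm_le_add_of_forall_abs_le_add fun i => abs_sub_max_min_le (hr i) (hs i)

end EuclideanSpace

namespace MeasureTheory

variable {α : Type*} {m : MeasurableSpace α} {μ : Measure α}

theorem eLpNorm_le_add_of_ae_norm_le_add {E F G : Type*} [NormedAddCommGroup E]
    [NormedAddCommGroup F] [NormedAddCommGroup G] {f : α → E} {g : α → F} {h : α → G}
    {p : ENNReal} (hp : 1 ≤ p) (hg : AEStronglyMeasurable g μ) (hh : AEStronglyMeasurable h μ)
    (hfgh : ∀ᵐ t ∂μ, ‖f t‖ ≤ ‖g t‖ + ‖h t‖) :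
    eLpNorm f p μ ≤ eLpNorm g p μ + eLpNorm h p μ :=
  calc eLpNorm f p μ ≤ eLpNorm (fun t => ‖g t‖ + ‖h t‖) p μ :=
        eLpNorm_mono_ae_real hfgh
    _ ≤ eLpNorm (fun t => ‖g t‖) p μ + eLpNorm (fun t => ‖h t‖) p μ :=
        eLpNorm_add_le hg.norm hh.norm hp
    _ = eLpNorm g p μ + eLpNorm h p μ := by rw [eLpNorm_norm, eLpNorm_norm]

section Inner

variable {E : Type*} [NormedAddCommGroup E] [InnerProductSpace ℝ E] {f g : α → E}

theorem MemLp.integrable_inner (hf : MemLp f 2 μ) (hg : MemLp g 2 μ) :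
    Integrable (fun t => inner ℝ (f t) (g t)) μ :=
  (L2.integrable_inner (hf.toLp f) (hg.toLp g)).congr <| by
    filter_upwards [hf.coeFn_toLp, hg.coeFn_toLp] with t hft hgt
    rw [hft, hgt]

theorem MemLp.abs_integral_inner_le (hf : MemLp f 2 μ) (hg : MemLp g 2 μ) :
    |∫ t, inner ℝ (f t) (g t) ∂μ| ≤ (eLpNorm f 2 μ).toReal * (eLpNorm g 2 μ).toReal := by
  have h := abs_real_inner_le_norm (hf.toLp f) (hg.toLp g)
  rwa [L2.inner_def, Lp.norm_toLp, Lp.norm_toLp,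
    integral_congr_ae (by
      filter_upwards [hf.coeFn_toLp, hg.coeFn_toLp] with t hft hgt
      rw [hft, hgt])] at h

end Inner

section UnitBox

open EuclideanSpace

variable {ι : Type*} [Fintype ι] {φ Q P R S : α → EuclideanSpace ℝ ι}

theorem MemLp.clampUnitBox (hP : MemLp P 2 μ) : MemLp (fun t => clampUnitBox (P t)) 2 μ :=
  hP.of_le (continuous_clampUnitBox.comp_aestronglyMeasurable hP.1)
    (ae_of_all _ fun _ => norm_clampUnitBox_le _)

theorem eLpNorm_smul_sub_clampUnitBox_le [IsFiniteMeasure μ] (c : ℝ) (hP : MemLp P 2 μ)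
    (hR : MemLp R 2 μ) (hS : MemLp S 2 μ) (hR₀ : ∀ i, ∀ᵐ t ∂μ, 0 ≤ R t i)
    (hS₀ : ∀ i, ∀ᵐ t ∂μ, 0 ≤ S t i) :
    (eLpNorm (fun t => c • (P t - clampUnitBox (P t))) 2 μ).toReal ≤
      (eLpNorm (fun t => c • (P t - R t)) 2 μ).toReal +
        (eLpNorm (fun t => c • (P t + S t - (WithLp.equiv 2 (ι → ℝ)).symm 1)) 2 μ).toReal := by
  have hPR : MemLp (fun t => c • (P t - R t)) 2 μ := (hP.sub hR).const_smul c
  have hPS : MemLp (fun t => c • (P t + S t - (WithLp.equiv 2 (ι → ℝ)).symm 1)) 2 μ :=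
    ((hP.add hS).sub (memLp_const _)).const_smul c
  rw [← ENNReal.toReal_add hPR.eLpNorm_ne_top hPS.eLpNorm_ne_top]
  refine ENNReal.toReal_mono (ENNReal.add_ne_top.2 ⟨hPR.eLpNorm_ne_top, hPS.eLpNorm_ne_top⟩)
    (eLpNorm_le_add_of_ae_norm_le_add one_le_two hPR.1 hPS.1 ?_)
  filter_upwards [ae_all_iff.2 hR₀, ae_all_iff.2 hS₀] with t hRt hSt
  exact norm_smul_sub_clampUnitBox_le c hRt hSt

theorem neg_eLpNorm_mul_le_mul_integral_inner_sub [IsFiniteMeasure μ] {c : ℝ} (hc : 0 ≤ c)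
    (hφ : MemLp φ 2 μ) (hQ : MemLp Q 2 μ) (hP : MemLp P 2 μ) (hR : MemLp R 2 μ)
    (hS : MemLp S 2 μ) (hR₀ : ∀ i, ∀ᵐ t ∂μ, 0 ≤ R t i) (hS₀ : ∀ i, ∀ᵐ t ∂μ, 0 ≤ S t i)
    (hK : 0 ≤ ∫ t, inner ℝ (φ t) (clampUnitBox (P t) - Q t) ∂μ) :
    -((eLpNorm φ 2 μ).toReal * ((eLpNorm (fun t => c • (P t - R t)) 2 μ).toReal +
        (eLpNorm (fun t => c • (P t + S t - (WithLp.equiv 2 (ι → ℝ)).symm 1)) 2 μ).toReal)) ≤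
      c * ∫ t, inner ℝ (φ t) (P t - Q t) ∂μ := by
  have hP' := hP.clampUnitBox
  have hsplit : c * ∫ t, inner ℝ (φ t) (P t - Q t) ∂μ =
      c * ∫ t, inner ℝ (φ t) (clampUnitBox (P t) - Q t) ∂μ +
        ∫ t, inner ℝ (φ t) (c • (P t - clampUnitBox (P t))) ∂μ := by
    have hadd :=
      integral_add (hφ.integrable_inner (hP'.sub hQ)) (hφ.integrable_inner (hP.sub hP'))
    simp only [Pi.sub_apply, ← inner_add_right, sub_add_sub_cancel'] at hadd
    simp_rw [real_inner_smul_right, integral_const_mul, hadd, mul_add]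
  have hdefect := neg_abs_le _ |>.trans' <| neg_le_neg <|
    hφ.abs_integral_inner_le (g := fun t => c • (P t - clampUnitBox (P t)))
      ((hP.sub hP').const_smul c)
  have hnorm := eLpNorm_smul_sub_clampUnitBox_le c hP hR hS hR₀ hS₀
  have hφ₀ : 0 ≤ (eLpNorm φ 2 μ).toReal := ENNReal.toReal_nonneg
  nlinarith [mul_le_mul_of_nonneg_left hnorm hφ₀, mul_nonneg hc hK]

end UnitBox

end MeasureTheory

theorem assumption_S_vaccination_general {T : ℝ} (k : ℕ)
    (φ Q : ℝ → EuclideanSpace ℝ (Fin k))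
    (μ : Measure ℝ) (hμ : μ = volume.restrict (Set.Icc 0 T))
    (hφ : MemLp φ 2 μ) (hQ : MemLp Q 2 μ)
    -- ψ(P) = ⟨φ, P - Q⟩, nonnegative on K and vanishing at Q
    (ψ : (ℝ → EuclideanSpace ℝ (Fin k)) → ℝ)
    (hψ : ∀ P, ψ P = ∫ t, (inner ℝ (φ t) (P t - Q t) : ℝ) ∂μ)
    (hψK : ∀ P : ℝ → EuclideanSpace ℝ (Fin k), MemLp P 2 μ → (∀ i, ∀ᵐ t ∂μ, P t i ∈ Set.Icc (0:ℝ) 1) → 0 ≤ ψ P)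
    -- the sequences appearing in the tangent cone condition
    (lam : ℕ → ℝ) (hlam : ∀ n, 0 ≤ lam n)
    (P R S : ℕ → ℝ → EuclideanSpace ℝ (Fin k))
    (hP : ∀ n, MemLp (P n) 2 μ) (hR : ∀ n, MemLp (R n) 2 μ) (hS : ∀ n, MemLp (S n) 2 μ)
    (hRpos : ∀ n, ∀ i, ∀ᵐ t ∂μ, 0 ≤ R n t i)
    (hSpos : ∀ n, ∀ i, ∀ᵐ t ∂μ, 0 ≤ S n t i)
    (α : ℕ → ℝ) (hα : ∀ n, 0 ≤ α n)
    (hconv1 : Tendsto (fun n => eLpNorm (fun t => lam n • (P n t - R n t)) 2 μ)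
      atTop (nhds 0))
    (hconv2 : Tendsto (fun n => eLpNorm
      (fun t => lam n • (P n t + S n t - (WithLp.equiv 2 (Fin k → ℝ)).symm 1)) 2 μ)
      atTop (nhds 0))
    (l : ℝ)
    (hconv3 : Tendsto (fun n => lam n * (ψ (P n) + α n)) atTop (nhds l)) :
    0 ≤ l := by
  have : IsFiniteMeasure μ := hμ ▸ inferInstance
  have hbound : ∀ n, -((eLpNorm φ 2 μ).toReal *
      ((eLpNorm (fun t => lam n • (P n t - R n t)) 2 μ).toReal +
        (eLpNorm (fun t => lam n • (P n t + S n t - (WithLp.equiv 2 (Fin k → ℝ)).symm 1))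
          2 μ).toReal)) ≤ lam n * (ψ (P n) + α n) := fun n => by
    have hK := hψK _ (hP n).clampUnitBox fun i =>
      ae_of_all _ fun _ => EuclideanSpace.clampUnitBox_apply_mem_Icc _ i
    rw [hψ] at hK ⊢
    refine (neg_eLpNorm_mul_le_mul_integral_inner_sub (hlam n) hφ hQ (hP n) (hR n) (hS n)
      (hRpos n) (hSpos n) hK).trans ?_
    exact mul_le_mul_of_nonneg_left (le_add_of_nonneg_right (hα n)) (hlam n)
  have hlim := (((ENNReal.tendsto_toReal ENNReal.zero_ne_top).comp hconv1).add
    ((ENNReal.tendsto_toReal ENNReal.zero_ne_top).comp hconv2)).const_mul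
      (eLpNorm φ 2 μ).toReal |>.neg
  simp only [ENNReal.toReal_zero, add_zero, mul_zero, neg_zero] at hlim
  exact le_of_tendsto_of_tendsto' hlim hconv3 hbound

/-- Verification of Assumption S for the dynamic vaccination game. -/
theorem assumption_S_vaccination {T : ℝ} (hT : 0 < T) (k : ℕ) (hk : 0 < k)
    (φ Q : ℝ → EuclideanSpace ℝ (Fin k))
    (μ : Measure ℝ) (hμ : μ = volume.restrict (Set.Icc 0 T))
    (hφ : MemLp φ 2 μ) (hQ : MemLp Q 2 μ)
    (hQbox : ∀ i, ∀ᵐ t ∂μ, Q t i ∈ Set.Icc (0:ℝ) 1)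
    -- ψ(P) = ⟨φ, P - Q⟩, nonnegative on K and vanishing at Q
    (ψ : (ℝ → EuclideanSpace ℝ (Fin k)) → ℝ)
    (hψ : ∀ P, ψ P = ∫ t, (inner ℝ (φ t) (P t - Q t) : ℝ) ∂μ)
    (hψK : ∀ P : ℝ → EuclideanSpace ℝ (Fin k), MemLp P 2 μ → (∀ i, ∀ᵐ t ∂μ, P t i ∈ Set.Icc (0:ℝ) 1) → 0 ≤ ψ P)
    -- sign conditions on φ relative to the level sets of Q
    (hsign : ∀ i, ∀ᵐ t ∂μ,
      (Q t i = 0 → φ t i ≤ 0) ∧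
      (0 < Q t i → Q t i < 1 → φ t i = 0) ∧
      (Q t i = 1 → 0 ≤ φ t i))
    -- the sequences appearing in the tangent cone condition
    (lam : ℕ → ℝ) (hlam : ∀ n, 0 ≤ lam n)
    (P R S : ℕ → ℝ → EuclideanSpace ℝ (Fin k))
    (hP : ∀ n, MemLp (P n) 2 μ) (hR : ∀ n, MemLp (R n) 2 μ) (hS : ∀ n, MemLp (S n) 2 μ)
    (hRpos : ∀ n, ∀ i, ∀ᵐ t ∂μ, 0 ≤ R n t i)
    (hSpos : ∀ n, ∀ i, ∀ᵐ t ∂μ, 0 ≤ S n t i)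
    (α : ℕ → ℝ) (hα : ∀ n, 0 ≤ α n)
    (hconv1 : Tendsto (fun n => eLpNorm (fun t => lam n • (P n t - R n t)) 2 μ)
      atTop (nhds 0))
    (hconv2 : Tendsto (fun n => eLpNorm
      (fun t => lam n • (P n t + S n t - (WithLp.equiv 2 (Fin k → ℝ)).symm 1)) 2 μ)
      atTop (nhds 0))
    (l : ℝ)
    (hconv3 : Tendsto (fun n => lam n * (ψ (P n) + α n)) atTop (nhds l)) :
    0 ≤ l :=
  assumption_S_vaccination_general k φ Q μ hμ hφ hQ ψ hψ hψK lam hlam P R S hP hR hS hRpos hSpos α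
    hα hconv1 hconv2 l hconv3
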